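/- Fix α < β. Let b, σ, h, k₊, k₋ : ℝ → ℝ satisfy: b, σ are C¹ with σ(x)² > 0 for all x, h is C¹ and positive, k₊, k₋ are C² and positive, and set q(x) = exp(∫₀ˣ 2b(y)/σ(y)² dy). Let J ⊂ (0,∞) be an open interval, λ : J → ℝ a function, and for each θ ∈ J let u_θ : ℝ → ℝ be twice continuously differentiable on [α,β], strictly positive on [α,β], satisfying (1/2)σ(x)²u_θ''(x) + b(x)u_θ'(x) + θ(h(x) − λ(θ))u_θ(x) = 0 for all x ∈ [α,β], the boundary conditions θk₊(α)u_θ(α) + u_θ'(α) = 0 and θk₋(β)u_θ(β) − u_θ'(β) = 0, and the normalization ∫_α^β (2θq(y)/σ(y)²)u_θ(y)² dy = 1. Assume the maps (θ,x) ↦ u_θ(x) and (θ,x) ↦ u_θ'(x) are continuous on J × [α,β]. Then λ is differentiable on J and λ'(θ) = (1/θ) ∫_α^β q(y)(u_θ'(y))² dy > 0 for every θ ∈ J. -/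

import Mathlib

/-!
Rewriting the equation in divergence form `(q u')' = θ (λ - h) w u` with `w = 2q/σ²`, Green's
formula and the Robin conditions give, for eigenfunctions `u_t`, `u_s`,
`(t λ(t) - s λ(s)) ∫ w u_t u_s = (t - s) (∫ w h u_t u_s + boundary terms)`,
with everything symmetric in `t` and `s`. Taking `s = θ` writes the difference quotient of `λ` at
`θ` as a quotient of integrals depending continuously on `t`, so `λ` is differentiable at `θ`; its
derivative is evaluated by the same formula at `t = s = θ`, and it is positive because
`u_θ'(α) = -θ k₊(α) u_θ(α) ≠ 0`.
-/

open Set intervalIntegral Topology MeasureTheory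

theorem hasDerivAt_of_eventually_sub_eq_smul {𝕜 F : Type*} [NontriviallyNormedField 𝕜]
    [NormedAddCommGroup F] [NormedSpace 𝕜 F] {f g : 𝕜 → F} {x : 𝕜}
    (hfg : ∀ᶠ y in 𝓝 x, f y - f x = (y - x) • g y) (hg : ContinuousAt g x) :
    HasDerivAt f (g x) x := by
  rw [hasDerivAt_iff_tendsto_slope]
  refine (hg.tendsto.mono_left nhdsWithin_le_nhds).congr' ?_
  filter_upwards [nhdsWithin_le_nhds hfg, self_mem_nhdsWithin] with y hy hne
  rw [slope_def_module, hy, smul_smul, inv_mul_cancel₀ (sub_ne_zero.2 hne), one_smul]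

theorem continuousOn_parametric_intervalIntegral_of_continuousOn {X E : Type*}
    [TopologicalSpace X] [NormedAddCommGroup E] [NormedSpace ℝ E] {F : X → ℝ → E} {U : Set X}
    {a b : ℝ} (hab : a ≤ b) (hF : ContinuousOn (Function.uncurry F) (U ×ˢ Icc a b)) :
    ContinuousOn (fun x => ∫ t in a..b, F x t) U := by
  rw [continuousOn_iff_continuous_domRestrict]
  -- Clamping the integration variable into `[a, b]` extends `F` continuously to `U × ℝ`.
  have hG : Continuous (Function.uncurry fun (x : U) (t : ℝ) => F x (projIcc a b hab t)) :=
    hF.comp_continuous (continuous_subtype_val.prodMap (continuous_subtype_val.comp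
      (continuous_projIcc (h := hab)))) fun p => ⟨p.1.2, (projIcc a b hab p.2).2⟩
  refine (continuous_parametric_intervalIntegral_of_continuous' (μ := volume) hG a b).congr
    fun x => integral_congr fun t ht => ?_
  rw [uIcc_of_le hab] at ht
  simp only [projIcc_of_mem hab ht]

theorem integral_mul_sq_pos {p f : ℝ → ℝ} {a b : ℝ} (hab : a < b)
    (hp : ContinuousOn p (Icc a b)) (hp0 : ∀ x ∈ Icc a b, 0 < p x)
    (hf : ContinuousOn f (Icc a b)) (hfa : f a ≠ 0) :
    0 < ∫ x in a..b, p x * f x ^ 2 :=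
  integral_pos hab (hp.mul (hf.pow 2))
    (fun x hx => mul_nonneg (hp0 x (Ioc_subset_Icc_self hx)).le (sq_nonneg _))
    ⟨a, left_mem_Icc.2 hab.le, mul_pos (hp0 a (left_mem_Icc.2 hab.le)) (pow_two_pos_of_ne_zero hfa)⟩

theorem hasDerivAt_exp_integral {c : ℝ → ℝ} (hc : Continuous c) (a x : ℝ) :
    HasDerivAt (fun x => Real.exp (∫ y in a..x, c y)) (Real.exp (∫ y in a..x, c y) * c x) x :=
  (hc.integral_hasStrictDerivAt a x).hasDerivAt.exp

theorem hasDerivAt_mul_deriv_of_ode {q d σ v : ℝ → ℝ} {c x : ℝ}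
    (hq : HasDerivAt q (q x * (2 * d x / σ x ^ 2)) x) (hσ : σ x ^ 2 ≠ 0)
    (hv : DifferentiableAt ℝ (deriv v) x)
    (hode : 1 / 2 * σ x ^ 2 * deriv (deriv v) x + d x * deriv v x + c * v x = 0) :
    HasDerivAt (fun y => q y * deriv v y) (-(c * (2 * q x / σ x ^ 2) * v x)) x := by
  refine (hq.mul hv.hasDerivAt).congr_deriv ?_
  linear_combination (2 * q x / σ x ^ 2) * hode - q x * deriv (deriv v) x * mul_inv_cancel₀ hσ

/-- `v` solves `(p v')' = t (μ - h) w v` on `[a, b]` with `v'(a) = -t kₐ v(a)` and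
`v'(b) = t k_b v(b)`. -/
structure IsRobinEigenfunction (p w h : ℝ → ℝ) (a b ka kb t μ : ℝ) (v : ℝ → ℝ) : Prop where
  differentiableAt : ∀ x ∈ Icc a b, DifferentiableAt ℝ v x
  continuousOn_deriv : ContinuousOn (deriv v) (Icc a b)
  hasDerivAt_flux :
    ∀ x ∈ Icc a b, HasDerivAt (fun y => p y * deriv v y) (t * (μ - h x) * w x * v x) x
  deriv_left : deriv v a = -(t * ka * v a)
  deriv_right : deriv v b = t * kb * v b

namespace IsRobinEigenfunction

variable {p w h v φ : ℝ → ℝ} {a b ka kb t μ s ν : ℝ}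

theorem continuousOn (hv : IsRobinEigenfunction p w h a b ka kb t μ v) :
    ContinuousOn v (Icc a b) :=
  fun x hx => (hv.differentiableAt x hx).continuousAt.continuousWithinAt

theorem integral_mul_deriv_mul_deriv (hv : IsRobinEigenfunction p w h a b ka kb t μ v)
    (hab : a ≤ b) (hp : ContinuousOn p (Icc a b)) (hw : ContinuousOn w (Icc a b))
    (hh : ContinuousOn h (Icc a b)) (hφ : ∀ x ∈ Icc a b, DifferentiableAt ℝ φ x)
    (hφ' : ContinuousOn (deriv φ) (Icc a b)) :
    ∫ x in a..b, p x * deriv v x * deriv φ x =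
      t * ((∫ x in a..b, w x * h x * v x * φ x) + p b * kb * v b * φ b + p a * ka * v a * φ a
        - μ * ∫ x in a..b, w x * v x * φ x) := by
  have hφc : ContinuousOn φ (Icc a b) :=
    fun x hx => (hφ x hx).continuousAt.continuousWithinAt
  have hvc := hv.continuousOn
  have hv' := hv.continuousOn_deriv
  have hI : IntervalIntegrable (fun x => w x * v x * φ x) volume a b :=
    ((hw.mul hvc).mul hφc).intervalIntegrable_of_Icc hab
  have hH : IntervalIntegrable (fun x => w x * h x * v x * φ x) volume a b :=
    (((hw.mul hh).mul hvc).mul hφc).intervalIntegrable_of_Icc hab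
  have hK : IntervalIntegrable (fun x => p x * deriv v x * deriv φ x) volume a b :=
    ((hp.mul hv').mul hφ').intervalIntegrable_of_Icc hab
  have hFTC := integral_eq_sub_of_hasDerivAt
    (f' := fun x => (t * μ * (w x * v x * φ x) - t * (w x * h x * v x * φ x))
      + p x * deriv v x * deriv φ x)
    (fun x hx => by
      rw [uIcc_of_le hab] at hx
      exact ((hv.hasDerivAt_flux x hx).mul (hφ x hx).hasDerivAt).congr_deriv (by ring))
    (((hI.const_mul _).sub (hH.const_mul _)).add hK)
  rw [integral_add ((hI.const_mul _).sub (hH.const_mul _)) hK,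
    integral_sub (hI.const_mul _) (hH.const_mul _), intervalIntegral.integral_const_mul,
    intervalIntegral.integral_const_mul] at hFTC
  simp only [Pi.mul_apply, hv.deriv_left, hv.deriv_right] at hFTC
  linear_combination hFTC

theorem sub_mul_integral_mul (hv : IsRobinEigenfunction p w h a b ka kb t μ v)
    (hφ : IsRobinEigenfunction p w h a b ka kb s ν φ) (hab : a ≤ b)
    (hp : ContinuousOn p (Icc a b)) (hw : ContinuousOn w (Icc a b))
    (hh : ContinuousOn h (Icc a b)) :
    (t * μ - s * ν) * ∫ x in a..b, w x * v x * φ x =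
      (t - s) * ((∫ x in a..b, w x * h x * v x * φ x)
        + p b * kb * v b * φ b + p a * ka * v a * φ a) := by
  have hvφ := hv.integral_mul_deriv_mul_deriv hab hp hw hh hφ.differentiableAt
    hφ.continuousOn_deriv
  have hφv := hφ.integral_mul_deriv_mul_deriv hab hp hw hh hv.differentiableAt
    hv.continuousOn_deriv
  have hK : ∫ x in a..b, p x * deriv φ x * deriv v x = ∫ x in a..b, p x * deriv v x * deriv φ x :=
    integral_congr fun x _ => by ring
  have hH : ∫ x in a..b, w x * h x * φ x * v x = ∫ x in a..b, w x * h x * v x * φ x :=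
    integral_congr fun x _ => by ring
  have hI : ∫ x in a..b, w x * φ x * v x = ∫ x in a..b, w x * v x * φ x :=
    integral_congr fun x _ => by ring
  rw [hK, hH, hI] at hφv
  linear_combination hvφ - hφv

theorem of_ode {q d σ : ℝ → ℝ} (hq : ∀ x ∈ Icc a b, HasDerivAt q (q x * (2 * d x / σ x ^ 2)) x)
    (hσ : ∀ x ∈ Icc a b, σ x ^ 2 ≠ 0) (hv : ∀ x ∈ Icc a b, DifferentiableAt ℝ v x)
    (hv' : ∀ x ∈ Icc a b, DifferentiableAt ℝ (deriv v) x)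
    (hode : ∀ x ∈ Icc a b,
      1 / 2 * σ x ^ 2 * deriv (deriv v) x + d x * deriv v x + t * (h x - μ) * v x = 0)
    (hleft : t * ka * v a + deriv v a = 0) (hright : t * kb * v b - deriv v b = 0) :
    IsRobinEigenfunction q (fun y => 2 * q y / σ y ^ 2) h a b ka kb t μ v where
  differentiableAt := hv
  continuousOn_deriv x hx := (hv' x hx).continuousAt.continuousWithinAt
  hasDerivAt_flux x hx :=
    (hasDerivAt_mul_deriv_of_ode (hq x hx) (hσ x hx) (hv' x hx) (hode x hx)).congr_deriv (by ring)
  deriv_left := by linear_combination hleft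
  deriv_right := by linear_combination -hright

end IsRobinEigenfunction

theorem hasDerivAt_eigenvalue_of_isRobinEigenfunction {p w h lam : ℝ → ℝ} {u : ℝ → ℝ → ℝ}
    {a b ka kb θ : ℝ} {J : Set ℝ} (hab : a ≤ b) (hp : ContinuousOn p (Icc a b))
    (hw : ContinuousOn w (Icc a b)) (hh : ContinuousOn h (Icc a b)) (hJ : J ∈ 𝓝 θ)
    (hu : ∀ t ∈ J, IsRobinEigenfunction p w h a b ka kb t (lam t) (u t))
    (hcont : ContinuousOn (Function.uncurry u) (J ×ˢ Icc a b))
    (hθ : θ * ∫ x in a..b, w x * u θ x ^ 2 ≠ 0) :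
    HasDerivAt lam
      ((∫ x in a..b, p x * deriv (u θ) x ^ 2) / (θ ^ 2 * ∫ x in a..b, w x * u θ x ^ 2)) θ := by
  have hθJ := mem_of_mem_nhds hJ
  have huθ := hu θ hθJ
  have hcont_integral : ∀ g : ℝ → ℝ, ContinuousOn g (Icc a b) →
      ContinuousAt (fun t => ∫ x in a..b, g x * u t x * u θ x) θ := fun g hg =>
    (continuousOn_parametric_intervalIntegral_of_continuousOn hab
      ((hg.comp continuousOn_snd fun _ hx => hx.2).mul hcont |>.mul
        (huθ.continuousOn.comp continuousOn_snd fun _ hx => hx.2)) θ hθJ).continuousAt hJ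
  have hcont_eval : ∀ x ∈ Icc a b, ContinuousAt (fun t => u t x) θ := fun x hx =>
    ((hcont (θ, x) ⟨hθJ, hx⟩).comp (f := fun t => (t, x))
      (Continuous.prodMk_left x).continuousWithinAt fun _ ht => ⟨ht, hx⟩).continuousAt hJ
  set I := fun t => ∫ x in a..b, w x * u t x * u θ x
  set N := fun t => (∫ x in a..b, w x * h x * u t x * u θ x)
    + p b * kb * u t b * u θ b + p a * ka * u t a * u θ a - lam θ * I t
  have hI : I θ = ∫ x in a..b, w x * u θ x ^ 2 := integral_congr fun x _ => by ring
  have hI_cont : ContinuousAt I θ := hcont_integral w hw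
  have hD : ContinuousAt (fun t => t * I t) θ := continuousAt_id.mul hI_cont
  have hN : ContinuousAt N θ := by
    have := hcont_integral (fun x => w x * h x) (hw.mul hh)
    have := hcont_eval a (left_mem_Icc.2 hab)
    have := hcont_eval b (right_mem_Icc.2 hab)
    fun_prop
  have hD0 : θ * I θ ≠ 0 := hI ▸ hθ
  have hslope : ∀ᶠ t in 𝓝 θ, lam t - lam θ = (t - θ) • (N t / (t * I t)) := by
    filter_upwards [hJ, hD.eventually_ne hD0] with t ht hDt
    rw [smul_eq_mul, mul_div_assoc', eq_div_iff hDt]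
    linear_combination (hu t ht).sub_mul_integral_mul huθ hab hp hw hh
  have hRayleigh : ∫ x in a..b, p x * deriv (u θ) x ^ 2 = θ * N θ :=
    (integral_congr fun x _ => by ring).trans (huθ.integral_mul_deriv_mul_deriv hab hp hw hh
      huθ.differentiableAt huθ.continuousOn_deriv)
  refine (hasDerivAt_of_eventually_sub_eq_smul hslope (hN.div hD hD0)).congr_deriv ?_
  have hθ0 : θ ≠ 0 := left_ne_zero_of_mul hD0
  rw [hRayleigh, ← hI]
  field_simp

theorem eigenvalue_derivative_theta_general
    (α β : ℝ) (hαβ : α < β)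
    (b σ h kp km : ℝ → ℝ)
    (hb : ContDiff ℝ 1 b) (hσ : ContDiff ℝ 1 σ)
    (hσpos : ∀ x : ℝ, 0 < (σ x) ^ 2)
    (hh : ContDiff ℝ 1 h)
    (hkppos : ∀ x : ℝ, 0 < kp x)
    (q : ℝ → ℝ)
    (hq : ∀ x : ℝ, q x = Real.exp (∫ y in (0 : ℝ)..x, 2 * b y / (σ y) ^ 2))
    (J : Set ℝ) (hJopen : IsOpen J)
    (hJpos : J ⊆ Ioi (0 : ℝ))
    (lam : ℝ → ℝ) (u : ℝ → ℝ → ℝ)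
    (hu1 : ∀ θ ∈ J, ∀ x ∈ Icc α β, DifferentiableAt ℝ (u θ) x)
    (hu2 : ∀ θ ∈ J, ∀ x ∈ Icc α β, DifferentiableAt ℝ (deriv (u θ)) x)
    (hupos : ∀ θ ∈ J, ∀ x ∈ Icc α β, 0 < u θ x)
    (hODE : ∀ θ ∈ J, ∀ x ∈ Icc α β,
      (1 / 2) * (σ x) ^ 2 * deriv (deriv (u θ)) x + b x * deriv (u θ) x
        + θ * (h x - lam θ) * u θ x = 0)
    (hbcα : ∀ θ ∈ J, θ * kp α * u θ α + deriv (u θ) α = 0)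
    (hbcβ : ∀ θ ∈ J, θ * km β * u θ β - deriv (u θ) β = 0)
    (hnorm : ∀ θ ∈ J,
      ∫ y in α..β, (2 * θ * q y / (σ y) ^ 2) * (u θ y) ^ 2 = 1)
    (hucont : ContinuousOn (fun p : ℝ × ℝ => u p.1 p.2) (J ×ˢ Icc α β)) :
    ∀ θ ∈ J,
      HasDerivAt lam ((1 / θ) * ∫ y in α..β, q y * (deriv (u θ) y) ^ 2) θ ∧
      0 < (1 / θ) * ∫ y in α..β, q y * (deriv (u θ) y) ^ 2 := by
  intro θ hθ
  have hσ0 : ∀ x, σ x ^ 2 ≠ 0 := fun x => (hσpos x).ne'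
  have hq' : ∀ x, HasDerivAt q (q x * (2 * b x / σ x ^ 2)) x := fun x => by
    rw [funext hq]
    exact hasDerivAt_exp_integral
      ((continuous_const.mul hb.continuous).div (hσ.continuous.pow 2) hσ0) 0 x
  have hq_cont : Continuous q := continuous_iff_continuousAt.2 fun x => (hq' x).continuousAt
  have hw : Continuous fun y => 2 * q y / σ y ^ 2 :=
    (continuous_const.mul hq_cont).div (hσ.continuous.pow 2) hσ0
  have heig : ∀ t ∈ J, IsRobinEigenfunction q (fun y => 2 * q y / σ y ^ 2) h α β (kp α) (km β)
      t (lam t) (u t) := fun t ht =>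
    .of_ode (fun x _ => hq' x) (fun x _ => hσ0 x) (hu1 t ht) (hu2 t ht) (hODE t ht)
      (hbcα t ht) (hbcβ t ht)
  have hnormθ : θ * ∫ x in α..β, 2 * q x / σ x ^ 2 * u θ x ^ 2 = 1 := by
    rw [← hnorm θ hθ, ← intervalIntegral.integral_const_mul]
    exact integral_congr fun x _ => by ring
  have hderiv := hasDerivAt_eigenvalue_of_isRobinEigenfunction hαβ.le hq_cont.continuousOn
    hw.continuousOn hh.continuous.continuousOn (hJopen.mem_nhds hθ) heig hucont
    (hnormθ ▸ one_ne_zero)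
  have hderiv_left : deriv (u θ) α ≠ 0 := by
    rw [(heig θ hθ).deriv_left]
    exact neg_ne_zero.2 (mul_pos (mul_pos (hJpos hθ) (hkppos α))
      (hupos θ hθ α (left_mem_Icc.2 hαβ.le))).ne'
  have hpos := integral_mul_sq_pos hαβ hq_cont.continuousOn
    (fun x _ => (hq x).symm ▸ Real.exp_pos _) (heig θ hθ).continuousOn_deriv hderiv_left
  refine ⟨hderiv.congr_deriv ?_, mul_pos (one_div_pos.2 (hJpos hθ)) hpos⟩
  rw [sq θ, mul_assoc, hnormθ, mul_one, one_div_mul_eq_div]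

/-- formula (3.13) of the paper's Lemma 3.1: the principal
eigenvalue is strictly increasing in the risk-sensitivity parameter `θ`. -/
theorem eigenvalue_derivative_theta
    (α β : ℝ) (hαβ : α < β)
    (b σ h kp km : ℝ → ℝ)
    (hb : ContDiff ℝ 1 b) (hσ : ContDiff ℝ 1 σ)
    (hσpos : ∀ x : ℝ, 0 < (σ x) ^ 2)
    (hh : ContDiff ℝ 1 h) (hhpos : ∀ x : ℝ, 0 < h x)
    (hkp : ContDiff ℝ 2 kp) (hkm : ContDiff ℝ 2 km)
    (hkppos : ∀ x : ℝ, 0 < kp x) (hkmpos : ∀ x : ℝ, 0 < km x)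
    (q : ℝ → ℝ)
    (hq : ∀ x : ℝ, q x = Real.exp (∫ y in (0 : ℝ)..x, 2 * b y / (σ y) ^ 2))
    (J : Set ℝ) (hJopen : IsOpen J) (hJconn : J.OrdConnected)
    (hJpos : J ⊆ Ioi (0 : ℝ))
    (lam : ℝ → ℝ) (u : ℝ → ℝ → ℝ)
    (hu1 : ∀ θ ∈ J, ∀ x ∈ Icc α β, DifferentiableAt ℝ (u θ) x)
    (hu2 : ∀ θ ∈ J, ∀ x ∈ Icc α β, DifferentiableAt ℝ (deriv (u θ)) x)
    (hu2c : ∀ θ ∈ J, ContinuousOn (deriv (deriv (u θ))) (Icc α β))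
    (hupos : ∀ θ ∈ J, ∀ x ∈ Icc α β, 0 < u θ x)
    (hODE : ∀ θ ∈ J, ∀ x ∈ Icc α β,
      (1 / 2) * (σ x) ^ 2 * deriv (deriv (u θ)) x + b x * deriv (u θ) x
        + θ * (h x - lam θ) * u θ x = 0)
    (hbcα : ∀ θ ∈ J, θ * kp α * u θ α + deriv (u θ) α = 0)
    (hbcβ : ∀ θ ∈ J, θ * km β * u θ β - deriv (u θ) β = 0)
    (hnorm : ∀ θ ∈ J,
      ∫ y in α..β, (2 * θ * q y / (σ y) ^ 2) * (u θ y) ^ 2 = 1)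
    (hucont : ContinuousOn (fun p : ℝ × ℝ => u p.1 p.2) (J ×ˢ Icc α β))
    (hu'cont : ContinuousOn (fun p : ℝ × ℝ => deriv (u p.1) p.2)
      (J ×ˢ Icc α β)) :
    ∀ θ ∈ J,
      HasDerivAt lam ((1 / θ) * ∫ y in α..β, q y * (deriv (u θ) y) ^ 2) θ ∧
      0 < (1 / θ) * ∫ y in α..β, q y * (deriv (u θ) y) ^ 2 :=
  eigenvalue_derivative_theta_general α β hαβ b σ h kp km hb hσ hσpos hh hkppos q hq J hJopen hJpos
    lam u hu1 hu2 hupos hODE hbcα hbcβ hnorm hucont
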